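/- arXiv:0901.3977 — 2 statements merged into one kernel-verified Lean document; each statement's English description precedes it below -/
import Mathlib

section
/- If (x, b) is i-tightly-constrained for every i = 1,…,r (every constrained-optimal control a* satisfies J_i(x,a*) = b_i for all i), and a* is such a constrained-optimal control, then a* is Pareto-optimal, so the point (w(x,b), b_1, …, b_r) lies on the Pareto front P(x). -/
/-- if `(x,b)` is `i`-tightly-constrained for every `i = 1,…,r`
(every constrained-optimal control has `J i = b i` for all `i`), then any
constrained-optimal control `a*` is Pareto-optimal, and hence its cost vector
`(w(x,b), b₁, …, b_r)` lies on the Pareto front. -/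
theorem tightly_constrained_optimal_is_pareto
    {A : Type*} (r : ℕ) (J0 : A → ℝ) (J : Fin r → A → ℝ) (b : Fin r → ℝ)
    -- the constrained value function at budget b:
    (w : EReal) (hw : w = ⨅ a ∈ {a : A | ∀ i, J i a ≤ b i}, (J0 a : EReal))
    -- (x,b) is i-tightly-constrained for every i:
    (htight : ∀ a : A, (∀ i, J i a ≤ b i) → (J0 a : EReal) = w →
        ∀ i, J i a = b i)
    -- a* is a constrained-optimal control:
    (astar : A) (hfeas : ∀ i, J i astar ≤ b i) (hopt : (J0 astar : EReal) = w) :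
    (¬ ∃ a : A, (J0 a ≤ J0 astar ∧ ∀ i, J i a ≤ J i astar) ∧
        (J0 a < J0 astar ∨ ∃ i, J i a < J i astar)) ∧
      (J0 astar : EReal) = w ∧ ∀ i, J i astar = b i := by
  have hstar_tight : ∀ i, J i astar = b i := htight astar hfeas hopt
  refine ⟨?_, hopt, hstar_tight⟩
  rintro ⟨a, ⟨h0, hle⟩, hstrict⟩
  have hafeas : ∀ i, J i a ≤ b i := fun i => (hle i).trans (hfeas i)
  have hwle : w ≤ (J0 a : EReal) := by
    rw [hw]
    exact iInf₂_le a hafeas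
  have h0e : (J0 a : EReal) = w := le_antisymm (hopt ▸ EReal.coe_le_coe_iff.mpr h0) hwle
  have ha_tight : ∀ i, J i a = b i := htight a hafeas h0e
  have h0eq : J0 a = J0 astar := by
    have := h0e.trans hopt.symm
    exact_mod_cast this
  rcases hstrict with h | ⟨i, h⟩
  · exact absurd h0eq (ne_of_lt h)
  · rw [ha_tight i, hstar_tight i] at h
    exact lt_irrefl _ h
end

section
/- Conversely, if for some i ∈ {1,…,r} the point (x,b) is i-slack — i.e., there exists a constrained-optimal control a* with J_i(x,a*) < b_i — then the cost vector (w(x,b), b_1,…,b_r) is not on the Pareto front P(x). -/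
/-- if for some index `i` the point `(x,b)` is `i`-slack — there
is a constrained-optimal control `a*` with `J i a* < b i` — then the vector
`(w(x,b), b₁, …, b_r)` is not on the Pareto front: no non-dominated control
realizes that cost vector. -/
theorem slack_point_not_on_pareto_front
    {A : Type*} (r : ℕ) (J0 : A → ℝ) (J : Fin r → A → ℝ) (b : Fin r → ℝ)
    (w : EReal) (hw : w = ⨅ a ∈ {a : A | ∀ j, J j a ≤ b j}, (J0 a : EReal))
    (hwfin : w < ⊤)
    -- a* is a constrained-optimal control, slack in coordinate i:
    (astar : A) (hfeas : ∀ j, J j astar ≤ b j) (hopt : (J0 astar : EReal) = w)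
    (i : Fin r) (hslack : J i astar < b i) :
    ¬ ∃ a : A, ((J0 a : EReal) = w ∧ ∀ j, J j a = b j) ∧
        ¬ ∃ a' : A, (J0 a' ≤ J0 a ∧ ∀ j, J j a' ≤ J j a) ∧
          (J0 a' < J0 a ∨ ∃ j, J j a' < J j a) := by
  rintro ⟨a, ⟨hJ0, hJ⟩, hnd⟩
  apply hnd
  have h0 : J0 astar = J0 a := by
    have := hopt.trans hJ0.symm
    exact_mod_cast this
  exact ⟨astar, ⟨h0.le, fun j => (hfeas j).trans (hJ j).symm.le⟩,
    Or.inr ⟨i, hslack.trans_eq (hJ i).symm⟩⟩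
end
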